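/- The trigonometric polynomial p(θ) = 2 + 2cos θ satisfies: limsup_{θ→0} p(π - θ)²/f(θ) < ∞, where f(θ) = (1/240)(160 - 60cos θ - 96cos 2θ - 4cos 3θ), and p(θ)² + p(π - θ)² > 0 for all θ ∈ [0,π]. -/

import Mathlib

open Real

/-- The IgA symbol `f(θ) = (1/240)(160 - 60 cos θ - 96 cos 2θ - 4 cos 3θ)`. -/
noncomputable def fIgA (θ : ℝ) : ℝ :=
  (1 / 240) * (160 - 60 * Real.cos θ - 96 * Real.cos (2 * θ) - 4 * Real.cos (3 * θ))

/-- The projector symbol `p(θ) = 2 + 2 cos θ`. -/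
noncomputable def pProj (θ : ℝ) : ℝ := 2 + 2 * Real.cos θ

/-! In `c = cos θ` one has `f = (1 - c)(c² + 13c + 16)/15` and `p(π - θ)² = 4(1 - c)²`, so
`30 f - p(π - θ)² = 2(1 - c)(1 + c)(14 + c) ≥ 0` for every `θ`: the quotient `p(π - θ)²/f` is
bounded by `30` globally (on `2πℤ`, where `f` vanishes, the quotient is `0 / 0 = 0`). Positivity
of `p(θ)² + p(π - θ)² = 8(1 + c²)` is immediate. -/

lemma fIgA_eq (θ : ℝ) : fIgA θ = (1 - cos θ) * (cos θ ^ 2 + 13 * cos θ + 16) / 15 := by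
  rw [fIgA, cos_two_mul, cos_three_mul]
  ring

lemma pProj_pi_sub (θ : ℝ) : pProj (π - θ) = 2 - 2 * cos θ := by
  rw [pProj, cos_pi_sub]
  ring

lemma sq_pProj_pi_sub_le_mul_fIgA (θ : ℝ) : pProj (π - θ) ^ 2 ≤ 30 * fIgA θ := by
  have h₁ : 0 ≤ 1 - cos θ := by linarith [cos_le_one θ]
  have h₂ : 0 ≤ 1 + cos θ := by linarith [neg_one_le_cos θ]
  have h₃ : 0 ≤ 14 + cos θ := by linarith [neg_one_le_cos θ]
  rw [pProj_pi_sub, fIgA_eq]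
  nlinarith [mul_nonneg (mul_nonneg h₁ h₂) h₃]

lemma fIgA_nonneg (θ : ℝ) : 0 ≤ fIgA θ := by
  nlinarith [sq_pProj_pi_sub_le_mul_fIgA θ, sq_nonneg (pProj (π - θ))]

lemma sq_pProj_add_sq_pProj_pi_sub (θ : ℝ) :
    pProj θ ^ 2 + pProj (π - θ) ^ 2 = 8 * (1 + cos θ ^ 2) := by
  rw [pProj_pi_sub, pProj]
  ring

/-- Two-grid approximation-property conditions: `p(π-θ)²/f(θ)` is bounded near `θ = 0`
(finite limsup) and `p(θ)² + p(π-θ)² > 0` on `[0,π]`. -/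
theorem projector_conditions :
    (∃ C : ℝ, ∀ᶠ θ in nhdsWithin (0:ℝ) {(0:ℝ)}ᶜ, (pProj (π - θ)) ^ 2 / fIgA θ ≤ C) ∧
    ∀ θ ∈ Set.Icc (0:ℝ) π, 0 < (pProj θ) ^ 2 + (pProj (π - θ)) ^ 2 := by
  refine ⟨⟨30, Filter.Eventually.of_forall fun θ => ?_⟩, fun θ _ => ?_⟩
  · exact div_le_of_le_mul₀ (fIgA_nonneg θ) (by norm_num) (sq_pProj_pi_sub_le_mul_fIgA θ)
  · rw [sq_pProj_add_sq_pProj_pi_sub]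
    positivity
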